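/- arXiv:1411.1352 — 2 statements merged into one kernel-verified Lean document; each statement's English description precedes it below -/
import Mathlib

section
/- Let U ⊆ ℝ^m and V ⊆ ℝ^n be subspaces of dimension r, and let P_{U^⊥} ∈ ℝ^{m×m}, P_{V^⊥} ∈ ℝ^{n×n} be the orthogonal projections onto their orthogonal complements. If Δ ∈ ℝ^{m×n} satisfies P_{U^⊥} Δ P_{V^⊥} = 0, then rank(Δ) ≤ 2r, and consequently ‖Δ‖_* ≤ √(2r) · ‖Δ‖_F. -/
/-!
Split `ℝⁿ = V ⊕ Vᗮ`. The hypothesis says exactly that `Δ` maps `Vᗮ` into `U`, so the range of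
`Δ` is spanned by `Δ V` and a subspace of `U`, each of dimension at most `r`. The nuclear norm is
the sum of the square roots of the at most `rank Δ` nonzero eigenvalues of `Δᵀ Δ`, whose sum is
`‖Δ‖_F²`; Cauchy–Schwarz then gives `‖Δ‖_* ≤ √(rank Δ) ‖Δ‖_F`.
-/

open Matrix
open scoped BigOperators

noncomputable section

/-- Frobenius norm -/
def frobNorm {m n : Type*} [Fintype m] [Fintype n] (M : Matrix m n ℝ) : ℝ :=
  Real.sqrt (∑ i, ∑ j, (M i j) ^ 2)

/-- nuclear norm (sum of singular values) -/
def nuclearNorm {m n : Type*} [Fintype m] [Fintype n] [DecidableEq n]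
    (M : Matrix m n ℝ) : ℝ :=
  ∑ i, Real.sqrt ((show (Mᵀ * M).IsHermitian by
    rw [← Matrix.conjTranspose_eq_transpose_of_trivial]
    exact Matrix.isHermitian_conjTranspose_mul_self M).eigenvalues i)

open Module

theorem LinearMap.finrank_range_le_of_map_le {K E F : Type*} [DivisionRing K]
    [AddCommGroup E] [Module K E] [AddCommGroup F] [Module K F]
    [FiniteDimensional K E] [FiniteDimensional K F]
    (T : E →ₗ[K] F) {V W : Submodule K E} (hVW : V ⊔ W = ⊤) {U : Submodule K F}
    (hW : W.map T ≤ U) : finrank K (LinearMap.range T) ≤ finrank K V + finrank K U := by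
  rw [LinearMap.range_eq_map, ← hVW, Submodule.map_sup]
  exact (Submodule.finrank_add_le_finrank_add_finrank _ _).trans
    (add_le_add (Submodule.finrank_map_le T V) (Submodule.finrank_mono hW))

theorem Submodule.map_orthogonal_le_of_orthogonalProjectionOnto_eq_zero
    {𝕜 E F : Type*} [RCLike 𝕜] [NormedAddCommGroup E] [InnerProductSpace 𝕜 E]
    [NormedAddCommGroup F] [InnerProductSpace 𝕜 F] (T : E →ₗ[𝕜] F)
    {U : Submodule 𝕜 F} [U.HasOrthogonalProjection] {V : Submodule 𝕜 E}
    [Vᗮ.HasOrthogonalProjection]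
    (h : ∀ y, Uᗮ.orthogonalProjectionOnto (T (Vᗮ.orthogonalProjectionOnto y)) = 0) :
    Vᗮ.map T ≤ U := by
  rintro _ ⟨x, hx, rfl⟩
  have hfix : (Vᗮ.orthogonalProjectionOnto x : E) = x := Submodule.starProjection_eq_self_iff.2 hx
  have hTx := h x
  rwa [hfix, Submodule.orthogonalProjectionOnto_eq_zero_iff,
    Submodule.orthogonal_orthogonal] at hTx

theorem Real.sum_sqrt_le_sqrt_card_ne_zero_mul_sqrt_sum {ι : Type*} [Fintype ι] {f : ι → ℝ}
    (hf : ∀ i, 0 ≤ f i) :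
    ∑ i, √(f i) ≤ √(Fintype.card {i // f i ≠ 0}) * √(∑ i, f i) := by
  classical
  set s := Finset.univ.filter (f · ≠ 0)
  have hsum : ∑ i, √(f i) = ∑ i ∈ s, √(f i) :=
    (Finset.sum_filter_of_ne (p := (f · ≠ 0)) fun i _ hi h0 => hi (by rw [h0, Real.sqrt_zero])).symm
  have hsq : ∑ i ∈ s, √(f i) ^ 2 ≤ ∑ i, f i := by
    simp only [Real.sq_sqrt (hf _)]
    exact Finset.sum_le_sum_of_subset_of_nonneg (Finset.subset_univ s) fun i _ _ => hf i
  rw [hsum, Fintype.card_subtype, ← Real.sqrt_mul (Nat.cast_nonneg _)]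
  refine Real.le_sqrt_of_sq_le ((sq_sum_le_card_mul_sum_sq).trans ?_)
  exact mul_le_mul_of_nonneg_left hsq (Nat.cast_nonneg _)

theorem frobNorm_nonneg {m n : Type*} [Fintype m] [Fintype n] (M : Matrix m n ℝ) :
    0 ≤ frobNorm M :=
  Real.sqrt_nonneg _

section NuclearNorm

variable {m n : Type*} [Fintype m] [Fintype n] [DecidableEq n]

theorem sum_eigenvalues_conjTranspose_mul_self_eq_frobNorm_sq (M : Matrix m n ℝ) :
    ∑ i, (isHermitian_conjTranspose_mul_self M).eigenvalues i = frobNorm M ^ 2 := by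
  have htrace := (isHermitian_conjTranspose_mul_self M).trace_eq_sum_eigenvalues
  simp only [RCLike.ofReal_real_eq_id, id] at htrace
  rw [← htrace, frobNorm, Real.sq_sqrt (by positivity), Finset.sum_comm]
  simp [trace, mul_apply, sq]

theorem nuclearNorm_le_sqrt_rank_mul_frobNorm (M : Matrix m n ℝ) :
    nuclearNorm M ≤ √M.rank * frobNorm M := by
  have hM := isHermitian_conjTranspose_mul_self M
  calc nuclearNorm M ≤ √(Fintype.card {i // hM.eigenvalues i ≠ 0}) * √(∑ i, hM.eigenvalues i) :=
        Real.sum_sqrt_le_sqrt_card_ne_zero_mul_sqrt_sum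
          (eigenvalues_conjTranspose_mul_self_nonneg M)
    _ = √M.rank * frobNorm M := by
        rw [sum_eigenvalues_conjTranspose_mul_self_eq_frobNorm_sq, Real.sqrt_sq (frobNorm_nonneg M),
          ← rank_conjTranspose_mul_self, hM.rank_eq_card_non_zero_eigs]

end NuclearNorm

/-- If `P_{U^⊥} Δ P_{V^⊥} = 0` for `r`-dimensional subspaces `U ⊆ ℝ^m`, `V ⊆ ℝ^n`,
then `rank Δ ≤ 2r` and hence `‖Δ‖_* ≤ √(2r) ‖Δ‖_F`. -/
theorem stmt11 (m n r : ℕ)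
    (U : Submodule ℝ (EuclideanSpace ℝ (Fin m)))
    (V : Submodule ℝ (EuclideanSpace ℝ (Fin n)))
    (hU : Module.finrank ℝ U = r) (hV : Module.finrank ℝ V = r)
    (Δ : Matrix (Fin m) (Fin n) ℝ)
    (h : ∀ y : EuclideanSpace ℝ (Fin n),
      Submodule.orthogonalProjectionOnto Uᗮ
        (Matrix.toEuclideanLin Δ ((Submodule.orthogonalProjectionOnto Vᗮ y : Vᗮ) :
          EuclideanSpace ℝ (Fin n))) = 0) :
    Δ.rank ≤ 2 * r ∧ nuclearNorm Δ ≤ Real.sqrt (2 * r) * frobNorm Δ := by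
  have hrank : Δ.rank ≤ 2 * r := by
    calc Δ.rank = finrank ℝ (LinearMap.range (toEuclideanLin Δ)) :=
          rank_eq_finrank_range_toLin Δ (PiLp.basisFun 2 ℝ _) (PiLp.basisFun 2 ℝ _)
      _ ≤ finrank ℝ V + finrank ℝ U :=
          (toEuclideanLin Δ).finrank_range_le_of_map_le V.sup_orthogonal_of_hasOrthogonalProjection
            (Submodule.map_orthogonal_le_of_orthogonalProjectionOnto_eq_zero _ h)
      _ = 2 * r := by rw [hU, hV, two_mul]
  refine ⟨hrank, (nuclearNorm_le_sqrt_rank_mul_frobNorm Δ).trans ?_⟩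
  exact mul_le_mul_of_nonneg_right (Real.sqrt_le_sqrt (by exact_mod_cast hrank)) (frobNorm_nonneg Δ)

end
end

section
/- Let Σ ∈ ℝ^{p_t p_s × p_t p_s} be block Toeplitz with respect to its p_t×p_t partition into p_s×p_s blocks, i.e., the (i,j)-th p_s×p_s block Σ(i,j) depends only on i − j. Then Σ admits a decomposition Σ = Σ_{i=1}^{m} σ_i · A_i ⊗ B_i with m ≤ min(2p_t−1, p_s²), where each A_i ∈ ℝ^{p_t×p_t} is a Toeplitz matrix with ‖A_i‖_F = 1, each B_i ∈ ℝ^{p_s×p_s} satisfies ‖B_i‖_F = 1, the σ_i ≥ 0 are nonincreasing, and the families {A_i : σ_i > 0} and {B_i : σ_i > 0} are each linearly independent. -/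
/-!
A block Toeplitz matrix is `∑ δ, T δ ⊗ F δ`, where `T δ` is the 0/1 matrix of the `δ`-th
diagonal and `F δ` the block repeated along that diagonal; the `T δ` are linearly independent and
there are at most `2 p_t - 1` of them. Expanding the blocks `F δ` in a basis `C_1, …, C_r` of
their span (so `r ≤ min (2 p_t - 1) p_s²`) and regrouping gives `∑ i, A_i ⊗ C_i` with every `A_i`
a combination of the `T δ`, hence Toeplitz. The `A_i` are independent because the coordinate
vectors of the `F δ` span `ℝ^r`. Normalizing both factors in Frobenius norm and sorting the
products of the norms gives the weights, which are all positive.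
-/

open Matrix
open scoped Kronecker BigOperators

noncomputable section

open Finset Module Submodule

section FrobeniusNorm

variable {m n : Type*} [Fintype m] [Fintype n]

lemma frobNorm_pos {M : Matrix m n ℝ} (h : M ≠ 0) : 0 < frobNorm M := by
  obtain ⟨i, j, hij⟩ : ∃ i j, M i j ≠ 0 := by
    by_contra! hc
    exact h (ext hc)
  refine Real.sqrt_pos.2 (sum_pos' (fun i _ => sum_nonneg fun j _ => sq_nonneg _)
    ⟨i, mem_univ _, sum_pos' (fun j _ => sq_nonneg _) ⟨j, mem_univ _, by positivity⟩⟩)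

lemma frobNorm_smul (c : ℝ) (M : Matrix m n ℝ) : frobNorm (c • M) = |c| * frobNorm M := by
  simp only [frobNorm, Matrix.smul_apply, smul_eq_mul, mul_pow, ← mul_sum]
  rw [Real.sqrt_mul (sq_nonneg c), Real.sqrt_sq_eq_abs]

lemma frobNorm_inv_smul_self {M : Matrix m n ℝ} (h : M ≠ 0) :
    frobNorm ((frobNorm M)⁻¹ • M) = 1 := by
  have hM := frobNorm_pos h
  rw [frobNorm_smul, abs_of_pos (inv_pos.2 hM), inv_mul_cancel₀ hM.ne']

lemma LinearIndependent.inv_frobNorm_smul {ι : Type*} {v : ι → Matrix m n ℝ}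
    (hv : LinearIndependent ℝ v) : LinearIndependent ℝ fun i => (frobNorm (v i))⁻¹ • v i :=
  hv.units_smul fun i => Units.mk0 _ (inv_ne_zero (frobNorm_pos (hv.ne_zero i)).ne')

end FrobeniusNorm

theorem LinearMap.exists_sum_eq_sum_linearIndependent {K M N P ι : Type*} [Field K]
    [AddCommGroup M] [Module K M] [AddCommGroup N] [Module K N] [AddCommGroup P] [Module K P]
    [Fintype ι] (f : M →ₗ[K] N →ₗ[K] P) {u : ι → M} (hu : LinearIndependent K u) (v : ι → N) :
    ∃ (r : ℕ) (a : Fin r → M) (b : Fin r → N), r = finrank K (span K (Set.range v)) ∧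
      (∀ i, a i ∈ span K (Set.range u)) ∧ LinearIndependent K a ∧ LinearIndependent K b ∧
      ∑ d, f (u d) (v d) = ∑ i, f (a i) (b i) := by
  set W := span K (Set.range v)
  have : Module.Finite K W := Module.Finite.span_of_finite K (Set.finite_range v)
  let e := finBasis K W
  let w : ι → W := fun d => ⟨v d, subset_span ⟨d, rfl⟩⟩
  let c : ι → Fin (finrank K W) → K := fun d i => e.repr (w d) i
  have hv : ∀ d, v d = ∑ i, c d i • (e i : N) := fun d =>
    calc v d = ((∑ i, e.repr (w d) i • e i : W) : N) := by rw [e.sum_repr]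
      _ = _ := by push_cast; rfl
  refine ⟨_, fun i => ∑ d, c d i • u d, fun i => e i, rfl,
    fun i => sum_mem fun d _ => smul_mem _ _ (subset_span ⟨d, rfl⟩), ?_,
    e.linearIndependent.map' W.subtype W.ker_subtype, ?_⟩
  · rw [Fintype.linearIndependent_iff]
    intro g hg
    have hcoord : ∀ d, ∑ i, g i * c d i = 0 := by
      refine Fintype.linearIndependent_iff.mp hu _ ?_
      simpa [smul_sum, smul_smul, sum_smul, sum_comm (γ := ι)] using hg
    -- `∑ g i • e.coord i` kills every `w d`, and the `w d` span `W`
    have hφ : ∑ i, g i • e.coord i = 0 := by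
      have hw : span K (Set.range w) = ⊤ := by
        apply map_injective_of_injective W.injective_subtype
        rw [map_span, Submodule.map_top, range_subtype, ← Set.range_comp]
        rfl
      refine LinearMap.ext_on_range hw fun d => ?_
      simpa [c] using hcoord d
    intro i
    simpa [Finsupp.single_apply] using LinearMap.congr_fun hφ (e i)
  · simp_rw [hv, map_sum, map_smul, LinearMap.sum_apply, LinearMap.smul_apply]
    rw [sum_comm]

namespace Matrix

variable (R : Type*) [CommRing R] (n : ℕ)

def toeplitzSubmodule : Submodule R (Matrix (Fin n) (Fin n) R) where
  carrier := {A | ∀ k l k' l' : Fin n, (k : ℤ) - l = k' - l' → A k l = A k' l'}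
  add_mem' hA hB k l k' l' h := by simp [hA k l k' l' h, hB k l k' l' h]
  zero_mem' _ _ _ _ _ := rfl
  smul_mem' c A hA k l k' l' h := by simp [hA k l k' l' h]

def diagonalOnes (δ : ℤ) : Matrix (Fin n) (Fin n) R :=
  of fun k l => if (k : ℤ) - l = δ then 1 else 0

def diagonalOffsets : Finset ℤ :=
  univ.image fun p : Fin n × Fin n => (p.1 : ℤ) - p.2

lemma card_diagonalOffsets_le : #(diagonalOffsets n) ≤ 2 * n - 1 := by
  have hsub : diagonalOffsets n ⊆ Icc (1 - n : ℤ) (n - 1) := by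
    simp only [diagonalOffsets, subset_iff, mem_image, mem_Icc]
    omega
  have := card_le_card hsub
  rw [Int.card_Icc] at this
  omega

lemma diagonalOnes_mem_toeplitzSubmodule (δ : ℤ) :
    diagonalOnes R n δ ∈ toeplitzSubmodule R n := by
  intro k l k' l' h
  simp [diagonalOnes, h]

lemma linearIndependent_diagonalOnes :
    LinearIndependent R fun δ : diagonalOffsets n => diagonalOnes R n δ := by
  rw [Fintype.linearIndependent_iff]
  rintro g hg ⟨δ, hδ⟩
  obtain ⟨⟨k, l⟩, -, rfl⟩ := mem_image.1 hδ
  have hkl := congr_fun₂ hg k l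
  simp only [sum_apply, Matrix.smul_apply, diagonalOnes, of_apply, smul_eq_mul, mul_ite, mul_one,
    mul_zero, zero_apply] at hkl
  rwa [Fintype.sum_eq_single ⟨_, hδ⟩ fun c hc => if_neg fun h => hc (Subtype.ext h.symm),
    if_pos rfl] at hkl

variable {R n}

lemma exists_eq_sum_diagonalOnes_kronecker {p q : Type*}
    (S : Matrix (Fin n × p) (Fin n × q) R)
    (hS : ∀ i j i' j' : Fin n, (i : ℤ) - (j : ℤ) = (i' : ℤ) - (j' : ℤ) →
      ∀ a b, S (i, a) (j, b) = S (i', a) (j', b)) :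
    ∃ F : ℤ → Matrix p q R, S = ∑ δ : diagonalOffsets n, diagonalOnes R n δ ⊗ₖ F δ := by
  obtain ⟨F, hF⟩ := (Function.factorsThrough_iff (fun x : Fin n × Fin n => of fun a b =>
      S (x.1, a) (x.2, b)) (f := fun x => (x.1 : ℤ) - x.2)).1
    fun x y h => ext fun a b => hS x.1 x.2 y.1 y.2 h a b
  refine ⟨F, ?_⟩
  ext ⟨k, a⟩ ⟨l, b⟩
  have hkl : ((k : ℤ) - l) ∈ diagonalOffsets n := mem_image_of_mem _ (mem_univ (k, l))
  simp only [sum_apply, kronecker_apply, diagonalOnes, of_apply, ite_mul, one_mul, zero_mul]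
  rw [Fintype.sum_eq_single ⟨_, hkl⟩ fun c hc => if_neg fun h => hc (Subtype.ext h.symm),
    if_pos rfl]
  exact congr_fun₂ (congr_fun hF (k, l)) a b

end Matrix

lemma exists_sum_kronecker_eq_sorted_normalized {r : ℕ}
    {l m n p : Type*} [Fintype l] [Fintype m] [Fintype n] [Fintype p]
    {V : Submodule ℝ (Matrix l m ℝ)} {A₀ : Fin r → Matrix l m ℝ} {B₀ : Fin r → Matrix n p ℝ}
    (hA₀V : ∀ i, A₀ i ∈ V) (hA₀ : LinearIndependent ℝ A₀) (hB₀ : LinearIndependent ℝ B₀) :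
    ∃ (σ : Fin r → ℝ) (A : Fin r → Matrix l m ℝ) (B : Fin r → Matrix n p ℝ),
      ∑ i, A₀ i ⊗ₖ B₀ i = ∑ i, σ i • (A i ⊗ₖ B i) ∧ (∀ i, A i ∈ V) ∧
      (∀ i, frobNorm (A i) = 1) ∧ (∀ i, frobNorm (B i) = 1) ∧ (∀ i, 0 < σ i) ∧ Antitone σ ∧
      LinearIndependent ℝ A ∧ LinearIndependent ℝ B := by
  let σ₀ : Fin r → ℝ := fun i => frobNorm (A₀ i) * frobNorm (B₀ i)
  let π := Tuple.sort (-σ₀)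
  refine ⟨σ₀ ∘ π, fun i => (frobNorm (A₀ (π i)))⁻¹ • A₀ (π i),
    fun i => (frobNorm (B₀ (π i)))⁻¹ • B₀ (π i), ?_, fun i => V.smul_mem _ (hA₀V _),
    fun i => frobNorm_inv_smul_self (hA₀.ne_zero _),
    fun i => frobNorm_inv_smul_self (hB₀.ne_zero _),
    fun i => mul_pos (frobNorm_pos (hA₀.ne_zero _)) (frobNorm_pos (hB₀.ne_zero _)), ?_,
    (hA₀.comp π π.injective).inv_frobNorm_smul, (hB₀.comp π π.injective).inv_frobNorm_smul⟩
  · rw [← Equiv.sum_comp π]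
    refine sum_congr rfl fun i _ => ?_
    conv_lhs => rw [← smul_inv_smul₀ (frobNorm_pos (hA₀.ne_zero (π i))).ne' (A₀ (π i)),
      ← smul_inv_smul₀ (frobNorm_pos (hB₀.ne_zero (π i))).ne' (B₀ (π i))]
    rw [smul_kronecker, kronecker_smul, smul_smul]
    rfl
  · exact (by simpa using (Tuple.monotone_sort (-σ₀)).neg : Antitone fun i => σ₀ (π i))

/-- A block Toeplitz matrix (blocks `Σ(i,j)` depending only on `i - j`) admits a
Kronecker decomposition `Σ = ∑ σ_i A_i ⊗ B_i` with at most `min(2p_t-1, p_s²)` terms,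
Toeplitz temporal factors `A_i` of unit Frobenius norm, unit Frobenius norm `B_i`,
nonnegative nonincreasing weights, and linearly independent factors. -/
theorem stmt17 (pt ps : ℕ) (S : Matrix (Fin pt × Fin ps) (Fin pt × Fin ps) ℝ)
    (hToep : ∀ i j i' j' : Fin pt, (i : ℤ) - (j : ℤ) = (i' : ℤ) - (j' : ℤ) →
      ∀ a b : Fin ps, S (i, a) (j, b) = S (i', a) (j', b)) :
    ∃ (m : ℕ), m ≤ min (2 * pt - 1) (ps * ps) ∧
    ∃ (σ : Fin m → ℝ) (A : Fin m → Matrix (Fin pt) (Fin pt) ℝ)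
      (B : Fin m → Matrix (Fin ps) (Fin ps) ℝ),
      S = ∑ i, σ i • (A i ⊗ₖ B i) ∧
      (∀ i, ∀ k l k' l' : Fin pt, (k : ℤ) - (l : ℤ) = (k' : ℤ) - (l' : ℤ) →
        A i k l = A i k' l') ∧
      (∀ i, frobNorm (A i) = 1) ∧
      (∀ i, frobNorm (B i) = 1) ∧
      (∀ i, 0 ≤ σ i) ∧
      Antitone σ ∧
      LinearIndependent ℝ (fun i : {i : Fin m // 0 < σ i} => A i) ∧
      LinearIndependent ℝ (fun i : {i : Fin m // 0 < σ i} => B i) := by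
  obtain ⟨F, hSF⟩ := exists_eq_sum_diagonalOnes_kronecker S hToep
  obtain ⟨r, A₀, B₀, rfl, hA₀T, hA₀, hB₀, hsum⟩ :=
    kroneckerBilinear.exists_sum_eq_sum_linearIndependent (linearIndependent_diagonalOnes ℝ pt)
      fun δ => F δ
  have hA₀V : ∀ i, A₀ i ∈ toeplitzSubmodule ℝ pt := fun i =>
    span_le.2 (by rintro _ ⟨δ, rfl⟩; exact diagonalOnes_mem_toeplitzSubmodule ℝ pt δ) (hA₀T i)
  obtain ⟨σ, A, B, hσsum, hAT, hA1, hB1, hσpos, hσanti, hAind, hBind⟩ :=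
    exists_sum_kronecker_eq_sorted_normalized hA₀V hA₀ hB₀
  refine ⟨_, le_min ?_ ?_, σ, A, B, ?_, hAT, hA1, hB1, fun i => (hσpos i).le, hσanti,
    hAind.comp _ Subtype.val_injective, hBind.comp _ Subtype.val_injective⟩
  · exact (finrank_range_le_card _).trans
      ((Fintype.card_coe _).trans_le (card_diagonalOffsets_le pt))
  · exact (Submodule.finrank_le _).trans_eq (by simp [finrank_matrix])
  · rw [hSF, ← hσsum]
    exact hsum

end
end
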